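/- Fix an integer k ≥ 1 and let P = (P₁,P₂,P₃) : ℝ³ → ℝ³ be a vector field whose components are real polynomials of total degree ≤ k−1. Define v : Ω∞° → ℝ³ (the pullback φ*P of the 2-form P) by v(x,y,z) = (1+z)^{−3}·( P₁(φ(x,y,z)) + x·P₃(φ(x,y,z)), P₂(φ(x,y,z)) + y·P₃(φ(x,y,z)), (1+z)·P₃(φ(x,y,z)) ). Then v belongs to Q^{k,k−1,k−1}_{k+2} × Q^{k−1,k,k−1}_{k+2} × Q^{k−1,k−1,k}_{k+2}, and div v belongs to Q^{k−1,k−1,k−1}_{k+3} on Ω∞°. (This is the membership underlying the inclusion P^{k−1} ⊂ U^{(2),k}(Ω) for the H(div)-conforming pyramidal element.) -/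

import Mathlib

noncomputable section

/-- The interior `Ω∞° = (0,1) × (0,1) × (0,∞)` of the infinite pyramid. -/
def PyrInfInt : Set (ℝ × ℝ × ℝ) :=
  {p | 0 < p.1 ∧ p.1 < 1 ∧ 0 < p.2.1 ∧ p.2.1 < 1 ∧ 0 < p.2.2}

/-- The projective map `φ(x,y,z) = (x/(1+z), y/(1+z), z/(1+z))`. -/
def phi : ℝ × ℝ × ℝ → ℝ × ℝ × ℝ :=
  fun p => (p.1 / (1 + p.2.2), p.2.1 / (1 + p.2.2), p.2.2 / (1 + p.2.2))

def qmon (k a b c : ℕ) : ℝ × ℝ × ℝ → ℝ :=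
  fun p => p.1 ^ a * p.2.1 ^ b * p.2.2 ^ c / (1 + p.2.2) ^ k

/-- The space `Q^{l,m,n}_k`. -/
def Qsp (l m n : ℤ) (k : ℕ) : Submodule ℝ ((ℝ × ℝ × ℝ) → ℝ) :=
  Submodule.span ℝ
    {f | ∃ a b c : ℕ, (a : ℤ) ≤ l ∧ (b : ℤ) ≤ m ∧ (c : ℤ) ≤ n ∧ f = qmon k a b c}

def evalPhi (P : MvPolynomial (Fin 3) ℝ) (p : ℝ × ℝ × ℝ) : ℝ :=
  MvPolynomial.eval ![(phi p).1, (phi p).2.1, (phi p).2.2] P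

def pdx (f : ℝ × ℝ × ℝ → ℝ) (p : ℝ × ℝ × ℝ) : ℝ := fderiv ℝ f p ((1 : ℝ), (0 : ℝ), (0 : ℝ))

def pdy (f : ℝ × ℝ × ℝ → ℝ) (p : ℝ × ℝ × ℝ) : ℝ := fderiv ℝ f p ((0 : ℝ), (1 : ℝ), (0 : ℝ))

def pdz (f : ℝ × ℝ × ℝ → ℝ) (p : ℝ × ℝ × ℝ) : ℝ := fderiv ℝ f p ((0 : ℝ), (0 : ℝ), (1 : ℝ))

/-! Since `φ` is projective, a monomial `φ^α` with `|α| ≤ d` equals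
`(1+z)^(d-|α|) x^α₀ y^α₁ z^α₂ / (1+z)^d`, and `(1+z)^(d-|α|) z^α₂` has `z`-degree at most `d`.
Hence `(P ∘ φ) / (1+z)^j ∈ Q^{d,d,d}_{d+j}` whenever `deg P ≤ d`, and the components of `v` follow
by multiplying by `x`, `y` and `1 + z`. For the divergence, the chain rule through `φ` gives the
Piola identity `div v = (div P) ∘ φ / (1+z)^4`, and `div P` again has degree at most `k - 1`. -/

namespace MvPolynomial

theorem totalDegree_pderiv_le {σ R : Type*} [CommSemiring R] (i : σ) (p : MvPolynomial σ R) :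
    (pderiv i p).totalDegree ≤ p.totalDegree := by
  conv_lhs => rw [p.as_sum]
  rw [map_sum]
  refine (totalDegree_finsetSum _ _).trans (Finset.sup_le fun s hs => ?_)
  rw [pderiv_monomial]
  exact (totalDegree_monomial_le _ _).trans
    ((Finsupp.degree_mono tsub_le_self).trans (le_totalDegree hs))

theorem hasFDerivAt_eval_comp {σ 𝕜 E : Type*} [Fintype σ] [NontriviallyNormedField 𝕜]
    [NormedAddCommGroup E] [NormedSpace 𝕜 E] {g : E → σ → 𝕜} {g' : σ → E →L[𝕜] 𝕜} {x : E}
    (hg : ∀ i, HasFDerivAt (fun y => g y i) (g' i) x) (p : MvPolynomial σ 𝕜) :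
    HasFDerivAt (fun y => eval (g y) p) (∑ i, eval (g x) (pderiv i p) • g' i) x := by
  classical
  -- The module `E →L[𝕜] 𝕜` is named in the `smul` lemmas because `simp` cannot infer it here.
  induction p using MvPolynomial.induction_on with
  | C a =>
    simp only [pderiv_C, map_zero, eval_C]
    exact (hasFDerivAt_const a x).congr_fderiv (by simp [zero_smul 𝕜 (g' _)])
  | add p q hp hq =>
    simp only [map_add, add_smul (M := E →L[𝕜] 𝕜), Finset.sum_add_distrib]
    exact hp.add hq
  | mul_X p i hp =>
    simp only [map_mul, eval_X]
    refine (hp.mul (hg i)).congr_fderiv ?_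
    simp [pderiv_X, Pi.single_apply, add_smul (M := E →L[𝕜] 𝕜), Finset.sum_add_distrib,
      mul_smul (α := 𝕜) (β := E →L[𝕜] 𝕜), Finset.smul_sum, apply_ite (eval (g x)),
      ite_smul, zero_smul 𝕜 (g' _)]

end MvPolynomial

open MvPolynomial

theorem HasFDerivAt.div {𝕜 E : Type*} [NontriviallyNormedField 𝕜] [NormedAddCommGroup E]
    [NormedSpace 𝕜 E] {c d : E → 𝕜} {c' d' : E →L[𝕜] 𝕜} {x : E} (hc : HasFDerivAt c c' x)
    (hd : HasFDerivAt d d' x) (hx : d x ≠ 0) :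
    HasFDerivAt (fun y => c y / d y) ((d x ^ 2)⁻¹ • (d x • c' - c x • d')) x := by
  simp only [div_eq_mul_inv]
  refine (hc.mul ((hasDerivAt_inv hx).comp_hasFDerivAt x hd)).congr_fderiv ?_
  ext v
  simp only [add_apply, smul_apply, sub_apply, smul_eq_mul, Function.comp_apply]
  field_simp
  ring

def linearForm3 (α β γ : ℝ) : ℝ × ℝ × ℝ →L[ℝ] ℝ :=
  α • ContinuousLinearMap.fst ℝ ℝ (ℝ × ℝ) +
    β • (ContinuousLinearMap.fst ℝ ℝ ℝ ∘L ContinuousLinearMap.snd ℝ ℝ (ℝ × ℝ)) +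
    γ • (ContinuousLinearMap.snd ℝ ℝ ℝ ∘L ContinuousLinearMap.snd ℝ ℝ (ℝ × ℝ))

@[simp]
theorem linearForm3_apply (α β γ : ℝ) (v : ℝ × ℝ × ℝ) :
    linearForm3 α β γ v = α * v.1 + β * v.2.1 + γ * v.2.2 := rfl

theorem hasFDerivAt_one_add_snd_snd (p : ℝ × ℝ × ℝ) :
    HasFDerivAt (fun q : ℝ × ℝ × ℝ => 1 + q.2.2) (linearForm3 0 0 1) p :=
  ((hasFDerivAt_snd.comp p hasFDerivAt_snd).const_add 1).congr_fderiv (by ext <;> simp)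

theorem hasFDerivAt_evalPhi (P : MvPolynomial (Fin 3) ℝ) {p : ℝ × ℝ × ℝ} (hp : 1 + p.2.2 ≠ 0) :
    HasFDerivAt (evalPhi P)
      (linearForm3 (evalPhi (pderiv 0 P) p / (1 + p.2.2)) (evalPhi (pderiv 1 P) p / (1 + p.2.2))
        ((evalPhi (pderiv 2 P) p - p.1 * evalPhi (pderiv 0 P) p
          - p.2.1 * evalPhi (pderiv 1 P) p) / (1 + p.2.2) ^ 2)) p := by
  have hz := hasFDerivAt_one_add_snd_snd p
  have h₀ := (hasFDerivAt_fst (p := p)).div hz hp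
  have h₁ := (hasFDerivAt_fst.comp p (hasFDerivAt_snd (p := p))).div hz hp
  have h₂ := (hasFDerivAt_snd.comp p (hasFDerivAt_snd (p := p))).div hz hp
  have hφ := hasFDerivAt_eval_comp (g := fun q => ![(phi q).1, (phi q).2.1, (phi q).2.2])
    (g' := ![_, _, _]) (x := p) (by intro i; fin_cases i; exacts [h₀, h₁, h₂]) P
  refine hφ.congr_fderiv (ContinuousLinearMap.ext fun v => ?_)
  simp only [Fin.sum_univ_three, Matrix.cons_val_zero, Matrix.cons_val_one, Matrix.cons_val_two,
    Matrix.head_cons, Matrix.tail_cons, add_apply, sub_apply, smul_apply, smul_eq_mul,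
    ContinuousLinearMap.comp_apply, ContinuousLinearMap.coe_fst', ContinuousLinearMap.coe_snd',
    Function.comp_apply, linearForm3_apply, evalPhi, phi]
  field_simp
  ring

theorem pdx_add_pdy_add_pdz_pullback (P₁ P₂ P₃ : MvPolynomial (Fin 3) ℝ) {p : ℝ × ℝ × ℝ}
    (hp : 1 + p.2.2 ≠ 0) :
    pdx (fun q => (evalPhi P₁ q + q.1 * evalPhi P₃ q) / (1 + q.2.2) ^ 3) p +
      pdy (fun q => (evalPhi P₂ q + q.2.1 * evalPhi P₃ q) / (1 + q.2.2) ^ 3) p +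
      pdz (fun q => ((1 + q.2.2) * evalPhi P₃ q) / (1 + q.2.2) ^ 3) p =
    evalPhi (pderiv 0 P₁ + pderiv 1 P₂ + pderiv 2 P₃) p / (1 + p.2.2) ^ 4 := by
  have hz := hasFDerivAt_one_add_snd_snd p
  have hpow := hz.pow 3
  have hpow_ne : (1 + p.2.2) ^ 3 ≠ 0 := pow_ne_zero 3 hp
  have h₁ : HasFDerivAt (fun q => (evalPhi P₁ q + q.1 * evalPhi P₃ q) / (1 + q.2.2) ^ 3) _ p :=
    ((hasFDerivAt_evalPhi P₁ hp).add
      (hasFDerivAt_fst.mul (hasFDerivAt_evalPhi P₃ hp))).div hpow hpow_ne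
  have h₂ : HasFDerivAt (fun q => (evalPhi P₂ q + q.2.1 * evalPhi P₃ q) / (1 + q.2.2) ^ 3) _ p :=
    ((hasFDerivAt_evalPhi P₂ hp).add
      ((hasFDerivAt_fst.comp p hasFDerivAt_snd).mul (hasFDerivAt_evalPhi P₃ hp))).div hpow hpow_ne
  have h₃ : HasFDerivAt (fun q => ((1 + q.2.2) * evalPhi P₃ q) / (1 + q.2.2) ^ 3) _ p :=
    (hz.mul (hasFDerivAt_evalPhi P₃ hp)).div hpow hpow_ne
  rw [pdx, pdy, pdz, h₁.fderiv, h₂.fderiv, h₃.fderiv]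
  simp only [evalPhi, map_add, Pi.add_apply, Pi.mul_apply, add_apply, sub_apply, smul_apply,
    ContinuousLinearMap.comp_apply, ContinuousLinearMap.coe_fst', ContinuousLinearMap.coe_snd',
    linearForm3_apply, smul_eq_mul, nsmul_eq_mul]
  field_simp
  ring

section Qsp

variable {l m n l' m' n' : ℤ} {K : ℕ}

theorem qmon_mem_Qsp {a b c : ℕ} (ha : (a : ℤ) ≤ l) (hb : (b : ℤ) ≤ m) (hc : (c : ℤ) ≤ n) :
    qmon K a b c ∈ Qsp l m n K :=
  Submodule.subset_span ⟨a, b, c, ha, hb, hc, rfl⟩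

theorem Qsp_mono (hl : l ≤ l') (hm : m ≤ m') (hn : n ≤ n') : Qsp l m n K ≤ Qsp l' m' n' K :=
  Submodule.span_mono <| by
    rintro _ ⟨a, b, c, ha, hb, hc, rfl⟩
    exact ⟨a, b, c, ha.trans hl, hb.trans hm, hc.trans hn, rfl⟩

theorem mul_mem_Qsp {h f : ℝ × ℝ × ℝ → ℝ}
    (hh : ∀ a b c : ℕ, (a : ℤ) ≤ l → (b : ℤ) ≤ m → (c : ℤ) ≤ n →
      h * qmon K a b c ∈ Qsp l' m' n' K)
    (hf : f ∈ Qsp l m n K) : h * f ∈ Qsp l' m' n' K := by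
  refine Submodule.map_span_le (LinearMap.mulLeft ℝ h) _ _ |>.mpr ?_ (Submodule.mem_map_of_mem hf)
  rintro _ ⟨a, b, c, ha, hb, hc, rfl⟩
  exact hh a b c ha hb hc

theorem fst_mul_mem_Qsp {f : ℝ × ℝ × ℝ → ℝ} (hf : f ∈ Qsp l m n K) :
    (fun p => p.1) * f ∈ Qsp (l + 1) m n K := by
  refine mul_mem_Qsp (fun a b c ha hb hc => ?_) hf
  convert qmon_mem_Qsp (l := l + 1) (K := K) (a := a + 1) (by push_cast; omega) hb hc using 1
  ext p; simp only [Pi.mul_apply, qmon]; ring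

theorem fst_snd_mul_mem_Qsp {f : ℝ × ℝ × ℝ → ℝ} (hf : f ∈ Qsp l m n K) :
    (fun p => p.2.1) * f ∈ Qsp l (m + 1) n K := by
  refine mul_mem_Qsp (fun a b c ha hb hc => ?_) hf
  convert qmon_mem_Qsp (m := m + 1) (K := K) (b := b + 1) ha (by push_cast; omega) hc using 1
  ext p; simp only [Pi.mul_apply, qmon]; ring

theorem one_add_snd_snd_mul_mem_Qsp {f : ℝ × ℝ × ℝ → ℝ} (hf : f ∈ Qsp l m n K) :
    (fun p => 1 + p.2.2) * f ∈ Qsp l m (n + 1) K := by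
  refine mul_mem_Qsp (fun a b c ha hb hc => ?_) hf
  convert add_mem (qmon_mem_Qsp (n := n + 1) (K := K) (c := c) ha hb (by omega))
    (qmon_mem_Qsp (n := n + 1) (K := K) (c := c + 1) ha hb (by push_cast; omega)) using 1
  ext p; simp only [Pi.mul_apply, Pi.add_apply, qmon]; ring

theorem one_add_snd_snd_pow_mul_qmon_mem_Qsp (a b c e : ℕ) :
    (fun p => 1 + p.2.2) ^ e * qmon K a b c ∈ Qsp a b (c + e) K := by
  induction e with
  | zero => simpa using qmon_mem_Qsp le_rfl le_rfl le_rfl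
  | succ e ih =>
    rw [pow_succ', mul_assoc]
    exact_mod_cast one_add_snd_snd_mul_mem_Qsp ih

theorem exists_mem_Qsp_evalPhi_div_pow_eq {d : ℕ} (P : MvPolynomial (Fin 3) ℝ)
    (hP : P.totalDegree ≤ d) (j : ℕ) :
    ∃ w ∈ Qsp d d d (d + j), ∀ p : ℝ × ℝ × ℝ, 1 + p.2.2 ≠ 0 →
      evalPhi P p / (1 + p.2.2) ^ j = w p := by
  have hdeg : ∀ s ∈ P.support, s 0 + s 1 + s 2 ≤ d := fun s hs => by
    have : s.degree ≤ d := (le_totalDegree hs).trans hP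
    rwa [Finsupp.degree_eq_sum, Fin.sum_univ_three] at this
  refine ⟨∑ s ∈ P.support, P.coeff s • ((fun p => 1 + p.2.2) ^ (d - (s 0 + s 1 + s 2)) *
    qmon (d + j) (s 0) (s 1) (s 2)), ?_, fun p hp => ?_⟩
  · refine Submodule.sum_mem _ fun s hs => Submodule.smul_mem _ _ ?_
    have hs' := hdeg s hs
    refine Qsp_mono ?_ ?_ ?_ (one_add_snd_snd_pow_mul_qmon_mem_Qsp _ _ _ _) <;> omega
  · simp only [evalPhi, eval_eq', Fin.prod_univ_three, Finset.sum_div, Finset.sum_apply,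
      Pi.smul_apply, Pi.mul_apply, Pi.pow_apply, qmon, phi, smul_eq_mul]
    refine Finset.sum_congr rfl fun s hs => ?_
    obtain ⟨e, he⟩ : ∃ e, d = s 0 + s 1 + s 2 + e := ⟨_, (Nat.add_sub_cancel' (hdeg s hs)).symm⟩
    simp only [he, Nat.add_sub_cancel_left, Matrix.cons_val_zero, Matrix.cons_val_one,
      Matrix.cons_val_two, Matrix.head_cons, Matrix.tail_cons, div_pow]
    field_simp
    ring

end Qsp

/-- for a polynomial vector field `P = (P₁,P₂,P₃)` of total degree `≤ k−1`,
the 2-form pullback `v = (1+z)^{−3}·(P₁∘φ + x·P₃∘φ, P₂∘φ + y·P₃∘φ, (1+z)·P₃∘φ)` belongs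
componentwise to `Q^{k,k−1,k−1}_{k+2} × Q^{k−1,k,k−1}_{k+2} × Q^{k−1,k−1,k}_{k+2}` on
`Ω∞°`, and `div v` belongs to `Q^{k−1,k−1,k−1}_{k+3}` on `Ω∞°`. -/
theorem pullback_two_form_of_polynomial (k : ℕ) (hk : 1 ≤ k)
    (P₁ P₂ P₃ : MvPolynomial (Fin 3) ℝ)
    (h₁ : P₁.totalDegree ≤ k - 1) (h₂ : P₂.totalDegree ≤ k - 1)
    (h₃ : P₃.totalDegree ≤ k - 1) :
    ∃ w₁ ∈ Qsp k ((k : ℤ) - 1) ((k : ℤ) - 1) (k + 2),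
    ∃ w₂ ∈ Qsp ((k : ℤ) - 1) k ((k : ℤ) - 1) (k + 2),
    ∃ w₃ ∈ Qsp ((k : ℤ) - 1) ((k : ℤ) - 1) k (k + 2),
    ∃ wd ∈ Qsp ((k : ℤ) - 1) ((k : ℤ) - 1) ((k : ℤ) - 1) (k + 3),
      ∀ p ∈ PyrInfInt,
        (evalPhi P₁ p + p.1 * evalPhi P₃ p) / (1 + p.2.2) ^ 3 = w₁ p ∧
        (evalPhi P₂ p + p.2.1 * evalPhi P₃ p) / (1 + p.2.2) ^ 3 = w₂ p ∧
        ((1 + p.2.2) * evalPhi P₃ p) / (1 + p.2.2) ^ 3 = w₃ p ∧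
        pdx (fun q => (evalPhi P₁ q + q.1 * evalPhi P₃ q) / (1 + q.2.2) ^ 3) p +
          pdy (fun q => (evalPhi P₂ q + q.2.1 * evalPhi P₃ q) / (1 + q.2.2) ^ 3) p +
          pdz (fun q => ((1 + q.2.2) * evalPhi P₃ q) / (1 + q.2.2) ^ 3) p = wd p := by
  obtain ⟨d, rfl⟩ : ∃ d, k = d + 1 := ⟨k - 1, by omega⟩
  simp only [Nat.add_sub_cancel] at h₁ h₂ h₃
  have hdiv : (pderiv 0 P₁ + pderiv 1 P₂ + pderiv 2 P₃).totalDegree ≤ d :=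
    (totalDegree_add _ _).trans <| max_le
      ((totalDegree_add _ _).trans <| max_le
        ((totalDegree_pderiv_le _ _).trans h₁) ((totalDegree_pderiv_le _ _).trans h₂))
      ((totalDegree_pderiv_le _ _).trans h₃)
  obtain ⟨u₁, hu₁, eq₁⟩ := exists_mem_Qsp_evalPhi_div_pow_eq P₁ h₁ 3
  obtain ⟨u₂, hu₂, eq₂⟩ := exists_mem_Qsp_evalPhi_div_pow_eq P₂ h₂ 3
  obtain ⟨u₃, hu₃, eq₃⟩ := exists_mem_Qsp_evalPhi_div_pow_eq P₃ h₃ 3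
  obtain ⟨ud, hud, eqd⟩ := exists_mem_Qsp_evalPhi_div_pow_eq _ hdiv 4
  push_cast
  simp only [add_sub_cancel_right]
  refine ⟨u₁ + (fun p => p.1) * u₃, add_mem (Qsp_mono (by omega) le_rfl le_rfl hu₁)
      (fst_mul_mem_Qsp hu₃),
    u₂ + (fun p => p.2.1) * u₃, add_mem (Qsp_mono le_rfl (by omega) le_rfl hu₂)
      (fst_snd_mul_mem_Qsp hu₃),
    (fun p => 1 + p.2.2) * u₃, one_add_snd_snd_mul_mem_Qsp hu₃, ud, hud, fun p hp => ?_⟩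
  have hz : 1 + p.2.2 ≠ 0 := (add_pos one_pos hp.2.2.2.2).ne'
  refine ⟨?_, ?_, ?_, ?_⟩
  · rw [add_div, mul_div_assoc, eq₁ p hz, eq₃ p hz]; rfl
  · rw [add_div, mul_div_assoc, eq₂ p hz, eq₃ p hz]; rfl
  · rw [mul_div_assoc, eq₃ p hz]; rfl
  · rw [pdx_add_pdy_add_pdz_pullback P₁ P₂ P₃ hz, eqd p hz]

end
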